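/- arXiv:1305.4215 — 3 statements merged into one kernel-verified Lean document; each statement's English description precedes it below -/
import Mathlib

section
/- Let X be a topological space, s ⊆ X a subset homeomorphic to a closed square disc, and α : I → X a loop such that α((t₁,t₂)) is contained in the interior of s and α(t₁), α(t₂) ∈ s. Then α is homotopic rel endpoints of [t₁,t₂] to the path that agrees with α outside (t₁,t₂) and follows the image (under the homeomorphism) of the straight line segment joining α(t₁) and α(t₂) inside s, by a homotopy whose image differs from α's image only inside s. -/
/-- The closed unit square in the plane. -/
def unitSquare : Set (ℝ × ℝ) := Set.Icc (0 : ℝ) 1 ×ˢ Set.Icc (0 : ℝ) 1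

/-- The open unit square in the plane. -/
def openUnitSquare : Set (ℝ × ℝ) := Set.Ioo (0 : ℝ) 1 ×ˢ Set.Ioo (0 : ℝ) 1

/-!
Pulled back through `e`, the piece `α|[t₁,t₂]` becomes a path `γ` in the square from `p` to `q`.
The straight-line homotopy from `γ` to the affine parametrisation `σ` of the segment `[p,q]`
stays in the square by convexity, so pushing it forward through `e` gives a homotopy inside `s`;
gluing `e ∘ σ` into `α` on `(t₁,t₂)` gives the new loop. Extending `e` to the whole plane by
clamping both coordinates to `[0,1]` makes every map involved globally continuous.
-/

open Set AffineMap

lemma ContinuousOn.piecewise_Ioo {R Y : Type*} [LinearOrder R] [TopologicalSpace R]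
    [OrderTopology R] [DenselyOrdered R] [TopologicalSpace Y] {f g : R → Y} {s : Set R}
    {a b : R} [DecidablePred (· ∈ Ioo a b)] (hab : a < b) (hf : ContinuousOn f (Icc a b))
    (hg : ContinuousOn g (s \ Ioo a b)) (ha : f a = g a) (hb : f b = g b) :
    ContinuousOn ((Ioo a b).piecewise f g) s := by
  refine ContinuousOn.piecewise ?_ ?_ ?_
  · rintro t ⟨-, ht⟩
    rw [frontier_Ioo hab] at ht
    rcases ht with rfl | rfl
    exacts [ha, hb]
  · exact hf.mono (by rw [closure_Ioo hab.ne]; exact inter_subset_right)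
  · rw [closure_compl, isOpen_Ioo.interior_eq]
    exact hg

lemma mapsTo_Icc_of_mapsTo_Ioo {R Y : Type*} [PartialOrder R] {f : R → Y} {a b : R} {s : Set Y}
    (hf : MapsTo f (Ioo a b) s) (ha : f a ∈ s) (hb : f b ∈ s) : MapsTo f (Icc a b) s := by
  intro t ht
  rcases eq_endpoints_or_mem_Ioo_of_mem_Icc ht with rfl | rfl | hmid
  exacts [ha, hb, hf hmid]

lemma piecewise_Ioo_eqOn_Icc {R Y : Type*} [PartialOrder R] {f g : R → Y} {a b : R}
    [DecidablePred (· ∈ Ioo a b)] (ha : f a = g a) (hb : f b = g b) :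
    EqOn ((Ioo a b).piecewise f g) f (Icc a b) := by
  intro t ht
  rcases eq_endpoints_or_mem_Ioo_of_mem_Icc ht with rfl | rfl | hmid
  · simp [ha]
  · simp [hb]
  · exact piecewise_eq_of_mem _ _ _ hmid

lemma sub_div_sub_mem_Icc {𝕜 : Type*} [Field 𝕜] [LinearOrder 𝕜] [IsStrictOrderedRing 𝕜]
    {a b t : 𝕜} (hab : a < b) (ht : t ∈ Icc a b) : (t - a) / (b - a) ∈ Icc (0 : 𝕜) 1 :=
  ⟨div_nonneg (sub_nonneg.2 ht.1) (sub_nonneg.2 hab.le),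
    (div_le_one (sub_pos.2 hab)).2 (sub_le_sub_right ht.2 a)⟩

lemma exists_continuous_param_segment {E : Type*} [AddCommGroup E] [Module ℝ E]
    [TopologicalSpace E] [IsTopologicalAddGroup E] [ContinuousSMul ℝ E] (x y : E) {a b : ℝ}
    (hab : a < b) :
    ∃ σ : ℝ → E, Continuous σ ∧ σ a = x ∧ σ b = y ∧ MapsTo σ (Icc a b) (segment ℝ x y) := by
  refine ⟨fun t => lineMap x y ((t - a) / (b - a)), by fun_prop, by simp,
    by simp [(sub_pos.2 hab).ne'], fun t ht => ?_⟩
  rw [segment_eq_image_lineMap]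
  exact mem_image_of_mem _ (sub_div_sub_mem_Icc hab ht)

lemma convex_unitSquare : Convex ℝ unitSquare :=
  (convex_Icc 0 1).prod (convex_Icc 0 1)

noncomputable def unitSquareRetraction (y : ℝ × ℝ) : unitSquare :=
  ⟨(projIcc 0 1 zero_le_one y.1, projIcc 0 1 zero_le_one y.2),
    (projIcc 0 1 zero_le_one y.1).2, (projIcc 0 1 zero_le_one y.2).2⟩

lemma continuous_unitSquareRetraction : Continuous unitSquareRetraction := by
  unfold unitSquareRetraction
  fun_prop

lemma unitSquareRetraction_coe (y : unitSquare) : unitSquareRetraction y = y := by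
  ext
  · simp [unitSquareRetraction, projIcc_of_mem _ y.2.1]
  · simp [unitSquareRetraction, projIcc_of_mem _ y.2.2]

section SquareChart

variable {X : Type*} [TopologicalSpace X] {s : Set X} (e : unitSquare ≃ₜ s)

noncomputable def squareChart (y : ℝ × ℝ) : X := e (unitSquareRetraction y)

@[fun_prop]
lemma continuous_squareChart : Continuous (squareChart e) :=
  continuous_subtype_val.comp (e.continuous.comp continuous_unitSquareRetraction)

lemma squareChart_mem (y : ℝ × ℝ) : squareChart e y ∈ s := (e _).2

lemma squareChart_coe (y : unitSquare) : squareChart e y = e y := by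
  rw [squareChart, unitSquareRetraction_coe]

lemma squareChart_injOn : InjOn (squareChart e) unitSquare := fun y hy z hz hyz => by
  rw [← Subtype.coe_mk y hy, ← Subtype.coe_mk z hz, squareChart_coe, squareChart_coe] at hyz
  exact congrArg Subtype.val (e.injective (Subtype.ext hyz))

lemma exists_continuous_lift_to_unitSquare {α : ℝ → X} {a b : ℝ} (hab : a ≤ b)
    (hα : ContinuousOn α (Icc a b)) (hαs : MapsTo α (Icc a b) s) :
    ∃ γ : ℝ → ℝ × ℝ, Continuous γ ∧ (∀ t, γ t ∈ unitSquare) ∧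
      EqOn (squareChart e ∘ γ) α (Icc a b) := by
  let γ : Icc a b → unitSquare := fun t => e.symm ⟨α t, hαs t.2⟩
  have hγ : Continuous γ := e.symm.continuous.comp (hα.domRestrict.subtype_mk _)
  refine ⟨IccExtend hab (fun t => (γ t : ℝ × ℝ)), (continuous_subtype_val.comp hγ).Icc_extend',
    fun t => (γ _).2, fun t ht => ?_⟩
  simp [IccExtend_of_mem _ _ ht, squareChart_coe, γ]

end SquareChart

theorem loop_piece_in_square_homotopic_to_segment_general
    {X : Type*} [TopologicalSpace X] (s : Set X) (e : unitSquare ≃ₜ s)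
    (α : ℝ → X) (hα : ContinuousOn α (Set.Icc (0 : ℝ) 1))
    (t₁ t₂ : ℝ) (ht : t₁ < t₂) (ht₁ : t₁ ∈ Set.Icc (0 : ℝ) 1) (ht₂ : t₂ ∈ Set.Icc (0 : ℝ) 1)
    (hint : ∀ t ∈ Set.Ioo t₁ t₂,
      ∃ u ∈ openUnitSquare, ∃ hu : u ∈ unitSquare, α t = (e ⟨u, hu⟩ : X))
    (p q : unitSquare) (hp : α t₁ = (e p : X)) (hq : α t₂ = (e q : X)) :
    ∃ α' : ℝ → X, ∃ H : ℝ × ℝ → X,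
      ContinuousOn α' (Set.Icc (0 : ℝ) 1) ∧
      (∀ t, t ∉ Set.Ioo t₁ t₂ → α' t = α t) ∧
      (∀ t ∈ Set.Icc t₁ t₂, ∃ u ∈ segment ℝ (p : ℝ × ℝ) (q : ℝ × ℝ),
        ∃ hu : u ∈ unitSquare, α' t = (e ⟨u, hu⟩ : X)) ∧
      ContinuousOn H (Set.Icc t₁ t₂ ×ˢ Set.Icc (0 : ℝ) 1) ∧
      (∀ t ∈ Set.Icc t₁ t₂, H (t, 0) = α t) ∧
      (∀ t ∈ Set.Icc t₁ t₂, H (t, 1) = α' t) ∧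
      (∀ u ∈ Set.Icc (0 : ℝ) 1, H (t₁, u) = α t₁ ∧ H (t₂, u) = α t₂) ∧
      (∀ t ∈ Set.Icc t₁ t₂, ∀ u ∈ Set.Icc (0 : ℝ) 1, H (t, u) = α t ∨ H (t, u) ∈ s) := by
  have hαs : MapsTo α (Icc t₁ t₂) s := by
    refine mapsTo_Icc_of_mapsTo_Ioo (fun t hmid => ?_) (hp ▸ (e p).2) (hq ▸ (e q).2)
    obtain ⟨u, -, hu, hαu⟩ := hint t hmid
    exact hαu ▸ (e ⟨u, hu⟩).2
  have hp' : squareChart e p = α t₁ := by rw [squareChart_coe, hp]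
  have hq' : squareChart e q = α t₂ := by rw [squareChart_coe, hq]
  obtain ⟨γ, hγc, hγS, hγα⟩ := exists_continuous_lift_to_unitSquare e ht.le
    (hα.mono (Icc_subset_Icc ht₁.1 ht₂.2)) hαs
  have hγ₁ : γ t₁ = p :=
    squareChart_injOn e (hγS t₁) p.2 ((hγα (left_mem_Icc.2 ht.le)).trans hp'.symm)
  have hγ₂ : γ t₂ = q :=
    squareChart_injOn e (hγS t₂) q.2 ((hγα (right_mem_Icc.2 ht.le)).trans hq'.symm)
  obtain ⟨σ, hσc, hσ₁, hσ₂, hσseg⟩ := exists_continuous_param_segment (p : ℝ × ℝ) q ht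
  set α' := (Ioo t₁ t₂).piecewise (squareChart e ∘ σ) α
  have hα'σ : EqOn α' (squareChart e ∘ σ) (Icc t₁ t₂) :=
    piecewise_Ioo_eqOn_Icc (by simp [hσ₁, hp']) (by simp [hσ₂, hq'])
  refine ⟨α', fun z => squareChart e (lineMap (γ z.1) (σ z.1) z.2), ?_,
    fun t ht' => piecewise_eq_of_notMem _ _ _ ht', fun t ht' => ?_, by fun_prop,
    fun t ht' => by simpa using hγα ht', fun t ht' => by simpa using (hα'σ ht').symm,
    fun u _ => by simp [hγ₁, hσ₁, hγ₂, hσ₂, hp', hq'], fun t _ u _ => Or.inr (squareChart_mem e _)⟩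
  · exact ContinuousOn.piecewise_Ioo ht (by fun_prop) (hα.mono sdiff_subset)
      (by simp [hσ₁, hp']) (by simp [hσ₂, hq'])
  · have hσS : σ t ∈ unitSquare := convex_unitSquare.segment_subset p.2 q.2 (hσseg ht')
    exact ⟨σ t, hσseg ht', hσS, (hα'σ ht').trans (squareChart_coe e ⟨_, hσS⟩)⟩

/-- If a piece of a loop runs inside (the interior of) a subset `s` homeomorphic to a closed
square disc, it can be replaced, by a homotopy rel the endpoints of `[t₁,t₂]` supported in `s`,
by the image of the straight segment joining its endpoints. -/
theorem loop_piece_in_square_homotopic_to_segment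
    {X : Type*} [TopologicalSpace X] (s : Set X) (e : unitSquare ≃ₜ s)
    (α : ℝ → X) (hα : ContinuousOn α (Set.Icc (0 : ℝ) 1))
    (hloop : α 0 = α 1)
    (t₁ t₂ : ℝ) (ht : t₁ < t₂) (ht₁ : t₁ ∈ Set.Icc (0 : ℝ) 1) (ht₂ : t₂ ∈ Set.Icc (0 : ℝ) 1)
    (hint : ∀ t ∈ Set.Ioo t₁ t₂,
      ∃ u ∈ openUnitSquare, ∃ hu : u ∈ unitSquare, α t = (e ⟨u, hu⟩ : X))
    (p q : unitSquare) (hp : α t₁ = (e p : X)) (hq : α t₂ = (e q : X)) :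
    ∃ α' : ℝ → X, ∃ H : ℝ × ℝ → X,
      ContinuousOn α' (Set.Icc (0 : ℝ) 1) ∧
      (∀ t, t ∉ Set.Ioo t₁ t₂ → α' t = α t) ∧
      (∀ t ∈ Set.Icc t₁ t₂, ∃ u ∈ segment ℝ (p : ℝ × ℝ) (q : ℝ × ℝ),
        ∃ hu : u ∈ unitSquare, α' t = (e ⟨u, hu⟩ : X)) ∧
      ContinuousOn H (Set.Icc t₁ t₂ ×ˢ Set.Icc (0 : ℝ) 1) ∧
      (∀ t ∈ Set.Icc t₁ t₂, H (t, 0) = α t) ∧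
      (∀ t ∈ Set.Icc t₁ t₂, H (t, 1) = α' t) ∧
      (∀ u ∈ Set.Icc (0 : ℝ) 1, H (t₁, u) = α t₁ ∧ H (t₂, u) = α t₂) ∧
      (∀ t ∈ Set.Icc t₁ t₂, ∀ u ∈ Set.Icc (0 : ℝ) 1, H (t, u) = α t ∨ H (t, u) ∈ s) :=
  loop_piece_in_square_homotopic_to_segment_general s e α hα t₁ t₂ ht ht₁ ht₂ hint p q hp hq
end

section
/- Let Y be a metric space and f : ∂𝔻 → Y a continuous null-homotopic loop on the boundary circle of the unit disc 𝔻, where Y is a one-dimensional Peano continuum. Then f extends to a continuous map h : 𝔻 → Y with h(𝔻) = f(∂𝔻); in particular diam h(𝔻) = diam f(∂𝔻). -/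
/-!
The image `K = f(∂𝔻)` is compact, path-connected and uniformly locally path-connected, being a
continuous image of the circle. In a one-dimensional separable metric space such a `K` is a
retract: cover `Kᶜ` by open sets `U i` of order at most `2`, locally finite off `K`, each within
twice its distance to `K` of an anchor `a i ∈ K` (Whitney balls, made locally finite by
paracompactness, then of order `≤ 2` shell by shell using `dim Y ≤ 1`). A point lying exactly in
`U s` and `U t` is sent to the point of a path in `K` from `a s` to `a t` given by its barycentric
weights; choosing these paths small for close anchors makes the map continuous along `K`.
If `r` is this retraction and `g` any extension of `f` to the disc, then `h = r ∘ g` extends `f`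
and `h(𝔻) = K`.
-/

/-- The Lebesgue covering dimension of a space is at most `n`: every open cover admits an
open refinement in which each point lies in at most `n + 1` members. -/
def CoveringDimLE (X : Type*) [TopologicalSpace X] (n : ℕ) : Prop :=
  ∀ (ι : Type) (U : ι → Set X), (∀ i, IsOpen (U i)) → (⋃ i, U i) = Set.univ →
    ∃ (κ : Type) (V : κ → Set X), (∀ k, IsOpen (V k)) ∧ (⋃ k, V k) = Set.univ ∧
      (∀ k, ∃ i, V k ⊆ U i) ∧
      ∀ x : X, {k | x ∈ V k}.Finite ∧ {k | x ∈ V k}.ncard ≤ n + 1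

open Metric Set Filter Topology

theorem Set.exists_eq_pair_of_encard_le_two {α : Type*} {s : Set α} {a : α} (ha : a ∈ s)
    (hs : s.encard ≤ 2) : ∃ b, s = {a, b} := by
  have h1 : (s \ {a}).encard ≤ 1 := by
    rw [← encard_sdiff_singleton_add_one ha] at hs
    exact (ENat.add_le_add_iff_right ENat.one_ne_top).1 (by simpa [one_add_one_eq_two] using hs)
  rcases encard_le_one_iff_eq.1 h1 with h | ⟨b, h⟩
  · exact ⟨a, by rw [pair_eq_singleton, ← insert_eq_of_mem ha, ← insert_sdiff_singleton, h,
      insert_empty_eq]⟩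
  · exact ⟨b, by rw [← insert_eq_of_mem ha, ← insert_sdiff_singleton, h]⟩

theorem Filter.tendsto_of_eventually_exists_finite {α β ι : Type*} {l : Filter α} {m : Filter β}
    {F : α → β} {g : ι → α → β} {T : Set ι} (hT : T.Finite) (hg : ∀ i ∈ T, Tendsto (g i) l m)
    (hF : ∀ᶠ x in l, ∃ i ∈ T, F x = g i x) : Tendsto F l m := fun W hW => by
  change ∀ᶠ x in l, F x ∈ W
  filter_upwards [hF, (eventually_all_finite hT).2 fun i hi => hg i hi hW] with x ⟨i, hi, hx⟩ hW'
  exact hx ▸ hW' i hi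

theorem Set.iInter_inter_eq_of_sdiff_subset {α : Type*} {W C : ℕ → Set α} (hW : Antitone W)
    (hWC : ∀ m, W m \ C m ⊆ W (m + 1)) {t : Set α} {M : ℕ} (ht : ∀ m ≥ M, Disjoint (C m) t) :
    (⋂ m, W m) ∩ t = W M ∩ t := by
  refine subset_antisymm (inter_subset_inter_left _ (iInter_subset _ M)) ?_
  rintro y ⟨hyM, hyt⟩
  refine ⟨mem_iInter.2 fun m => ?_, hyt⟩
  rcases le_total m M with h | h
  · exact hW h hyM
  · induction m, h using Nat.le_induction with
    | base => exact hyM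
    | succ m hm ih => exact hWC m ⟨ih, fun hyC => (ht m hm).notMem_of_mem_left hyC hyt⟩

namespace CoveringDimLE

variable {Y : Type*} [TopologicalSpace Y] {n : ℕ}

theorem exists_shrinking (hdim : CoveringDimLE Y n) {ι : Type} {U : ι → Set Y}
    (hU : ∀ i, IsOpen (U i)) (hcov : ⋃ i, U i = univ) :
    ∃ V : ι → Set Y, (∀ i, IsOpen (V i)) ∧ (∀ i, V i ⊆ U i) ∧ ⋃ i, V i = univ ∧
      ∀ x, {i | x ∈ V i}.encard ≤ n + 1 := by
  obtain ⟨κ, W, hWo, hWcov, hWU, hWord⟩ := hdim ι U hU hcov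
  choose φ hφ using hWU
  refine ⟨fun i => ⋃ (k) (_ : φ k = i), W k, fun i => isOpen_biUnion fun k _ => hWo k,
    fun i => iUnion₂_subset fun k hk => hk ▸ hφ k, ?_, fun x => ?_⟩
  · simp only [iUnion_eq_univ_iff, mem_iUnion] at hWcov ⊢
    exact fun x => let ⟨k, hk⟩ := hWcov x; ⟨φ k, k, rfl, hk⟩
  · have hfib : {i | x ∈ ⋃ (k) (_ : φ k = i), W k} = φ '' {k | x ∈ W k} := by
      ext i; simp [and_comm]
    calc {i | x ∈ ⋃ (k) (_ : φ k = i), W k}.encard ≤ {k | x ∈ W k}.encard :=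
          hfib ▸ encard_image_le φ _
      _ = {k | x ∈ W k}.ncard := (hWord x).1.cast_ncard_eq.symm
      _ ≤ n + 1 := by exact_mod_cast (hWord x).2

theorem exists_shrinking_on_closed (hdim : CoveringDimLE Y n) {ι : Type} {V : ι → Set Y}
    (hV : ∀ i, IsOpen (V i)) {C : Set Y} (hC : IsClosed C) (hCV : C ⊆ ⋃ i, V i) :
    ∃ V' : ι → Set Y, (∀ i, IsOpen (V' i)) ∧ (∀ i, V' i ⊆ V i) ∧ (∀ i, V i \ C ⊆ V' i) ∧
      ⋃ i, V' i = ⋃ i, V i ∧ ∀ x ∈ C, {i | x ∈ V' i}.encard ≤ n + 1 := by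
  -- shrink the cover of `Y` by `Cᶜ` and the `V i`, and keep the old `V i` away from `C`
  obtain ⟨W, hWo, hWA, hWcov, hWord⟩ :=
    hdim.exists_shrinking (U := fun o : Option ι => o.elim Cᶜ V)
    (by rintro (_ | i); exacts [hC.isOpen_compl, hV i])
    (eq_univ_of_forall fun x => by
      by_cases hx : x ∈ C
      · obtain ⟨i, hi⟩ := mem_iUnion.1 (hCV hx)
        exact mem_iUnion.2 ⟨some i, hi⟩
      · exact mem_iUnion.2 ⟨none, hx⟩)
  have hV'V : ∀ i, V i \ C ∪ W (some i) ⊆ V i := fun i => union_subset sdiff_subset (hWA _)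
  refine ⟨fun i => V i \ C ∪ W (some i), fun i => ((hV i).sdiff hC).union (hWo _), hV'V,
    fun i => subset_union_left, subset_antisymm (iUnion_mono hV'V) fun x hx => ?_, fun x hx => ?_⟩
  · by_cases hxC : x ∈ C
    · obtain ⟨_ | i, hi⟩ := mem_iUnion.1 (hWcov ▸ mem_univ x)
      · exact absurd hxC (hWA none hi)
      · exact mem_iUnion.2 ⟨i, Or.inr hi⟩
    · obtain ⟨i, hi⟩ := mem_iUnion.1 hx
      exact mem_iUnion.2 ⟨i, Or.inl ⟨hi, hxC⟩⟩
  · have hsome : {i | x ∈ V i \ C ∪ W (some i)} = some ⁻¹' {o | x ∈ W o} := by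
      ext i; simp [hx]
    beta_reduce
    rw [hsome]
    calc (some ⁻¹' {o | x ∈ W o}).encard = (some '' (some ⁻¹' {o | x ∈ W o})).encard :=
          ((Option.some_injective ι).encard_image _).symm
      _ ≤ n + 1 := (encard_mono (image_preimage_subset _ _)).trans (hWord x)

theorem exists_shrinking_of_locallyFinite_closed (hdim : CoveringDimLE Y n) {ι : Type}
    {U : ι → Set Y} (hU : ∀ i, IsOpen (U i)) {C : ℕ → Set Y} (hC : ∀ m, IsClosed (C m))
    (hCU : ⋃ m, C m = ⋃ i, U i)
    (hClf : ∀ x ∈ ⋃ i, U i, ∃ t ∈ 𝓝 x, {m | (C m ∩ t).Nonempty}.Finite) :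
    ∃ V : ι → Set Y, (∀ i, IsOpen (V i)) ∧ (∀ i, V i ⊆ U i) ∧ ⋃ i, V i = ⋃ i, U i ∧
      ∀ x, {i | x ∈ V i}.encard ≤ n + 1 := by
  have hstep : ∀ V : ι → Set Y, ((∀ i, IsOpen (V i)) ∧ ⋃ i, V i = ⋃ i, U i) → ∀ m,
      ∃ V' : ι → Set Y, ((∀ i, IsOpen (V' i)) ∧ ⋃ i, V' i = ⋃ i, U i) ∧ (∀ i, V' i ⊆ V i) ∧
        (∀ i, V i \ C m ⊆ V' i) ∧ ∀ x ∈ C m, {i | x ∈ V' i}.encard ≤ n + 1 := by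
    rintro V ⟨hVo, hVU⟩ m
    obtain ⟨V', hV'o, hV'V, hVV', hV'U, hord⟩ :=
      hdim.exists_shrinking_on_closed hVo (hC m) (hVU ▸ hCU ▸ subset_iUnion C m)
    exact ⟨V', ⟨hV'o, hV'U.trans hVU⟩, hV'V, hVV', hord⟩
  choose! next hnext using hstep
  let W : ℕ → ι → Set Y := fun m => Nat.rec U (fun m V => next V m) m
  have hgood : ∀ m, (∀ i, IsOpen (W m i)) ∧ ⋃ i, W m i = ⋃ i, U i := fun m => by
    induction m with
    | zero => exact ⟨hU, rfl⟩
    | succ m ih => exact (hnext _ ih m).1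
  have hW := fun m => (hnext _ (hgood m) m).2
  have hanti : ∀ i, Antitone (W · i) := fun i => antitone_nat_of_succ_le fun m => (hW m).1 i
  -- a neighbourhood meeting no `C m` with `m ≥ M` is not shrunk any more after step `M`
  have hstab : ∀ x ∈ ⋃ i, U i, ∃ t ∈ 𝓝 x, ∃ M, ∀ i, (⋂ m, W m i) ∩ t = W M i ∩ t := by
    intro x hx
    obtain ⟨t, ht, hfin⟩ := hClf x hx
    obtain ⟨M, hM⟩ := eventually_atTop.1 (Nat.cofinite_eq_atTop ▸ hfin.eventually_cofinite_notMem)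
    refine ⟨t, ht, M, fun i => iInter_inter_eq_of_sdiff_subset (hanti i) (fun m => (hW m).2.1 i)
      fun m hm => disjoint_iff_inter_eq_empty.2 (not_nonempty_iff_eq_empty.1 (hM m hm))⟩
  refine ⟨fun i => ⋂ m, W m i, fun i => isOpen_iff_mem_nhds.2 fun x hx => ?_,
    fun i => iInter_subset _ 0, subset_antisymm (iUnion_mono fun i => iInter_subset _ 0)
      fun x hx => ?_, fun x => ?_⟩
  · obtain ⟨t, ht, M, hM⟩ := hstab x (mem_iUnion.2 ⟨i, iInter_subset _ 0 hx⟩)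
    have hnhds : W M i ∩ t ∈ 𝓝 x := inter_mem (((hgood M).1 i).mem_nhds (iInter_subset _ M hx)) ht
    exact mem_of_superset (hM i ▸ hnhds) inter_subset_left
  · obtain ⟨t, ht, M, hM⟩ := hstab x hx
    obtain ⟨i, hi⟩ := mem_iUnion.1 ((hgood M).2.symm ▸ hx)
    exact mem_iUnion.2 ⟨i, ((hM i).symm ▸ ⟨hi, mem_of_mem_nhds ht⟩ : x ∈ _ ∩ t).1⟩
  · rcases eq_empty_or_nonempty {i | x ∈ ⋂ m, W m i} with h | ⟨i, hi⟩
    · rw [h, encard_empty]; exact zero_le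
    obtain ⟨m, hm⟩ := mem_iUnion.1 (hCU ▸ mem_iUnion.2 ⟨i, iInter_subset _ 0 hi⟩ : x ∈ ⋃ m, C m)
    refine (encard_mono (b := {j | x ∈ next (W m) m j}) ?_).trans ((hW m).2.2 x hm)
    exact fun j (hj : x ∈ ⋂ m, W m j) => mem_iInter.1 hj (m + 1)

end CoveringDimLE

section DyadicShell

variable {Y : Type*} {ρ : Y → ℝ}

/-- Truncating `ρ` at `1` lets the shells cover all of `{0 < ρ}`. -/
def dyadicShell (ρ : Y → ℝ) (m : ℕ) : Set Y :=
  {y | (1 / 2 : ℝ) ^ (m + 1) ≤ min (ρ y) 1 ∧ min (ρ y) 1 ≤ (1 / 2) ^ m}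

theorem isClosed_dyadicShell [TopologicalSpace Y] (hρ : Continuous ρ) (m : ℕ) :
    IsClosed (dyadicShell ρ m) :=
  (isClosed_le continuous_const (hρ.min continuous_const)).inter
    (isClosed_le (hρ.min continuous_const) continuous_const)

theorem iUnion_dyadicShell (ρ : Y → ℝ) : ⋃ m, dyadicShell ρ m = {y | 0 < ρ y} := by
  ext y
  simp only [dyadicShell, mem_iUnion, mem_ofPred_eq]
  constructor
  · rintro ⟨m, hm, -⟩
    exact (pow_pos (by norm_num) _).trans_le (hm.trans (min_le_left _ _))
  · intro hy
    obtain ⟨m, hm, hm'⟩ := exists_nat_pow_near_of_lt_one (lt_min hy one_pos) (min_le_right _ _)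
      (by norm_num : (0 : ℝ) < 1 / 2) (by norm_num)
    exact ⟨m, hm.le, hm'⟩

theorem exists_mem_nhds_finite_dyadicShell [TopologicalSpace Y] (hρ : Continuous ρ) {x : Y}
    (hx : 0 < ρ x) :
    ∃ t ∈ 𝓝 x, {m | (dyadicShell ρ m ∩ t).Nonempty}.Finite := by
  obtain ⟨N, hN⟩ := exists_pow_lt_of_lt_one (lt_min (half_pos hx) one_pos)
    (by norm_num : (1 / 2 : ℝ) < 1)
  refine ⟨{y | ρ x / 2 < ρ y}, (isOpen_lt continuous_const hρ).mem_nhds (half_lt_self hx),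
    (finite_Iio N).subset ?_⟩
  rintro m ⟨y, ⟨-, hym⟩, hyx⟩
  rw [mem_Iio]
  by_contra! hNm
  have : (1 / 2 : ℝ) ^ m ≤ (1 / 2) ^ N := pow_le_pow_of_le_one (by norm_num) (by norm_num) hNm
  have : min (ρ x / 2) 1 ≤ min (ρ y) 1 := min_le_min_right _ (le_of_lt hyx)
  linarith

end DyadicShell

theorem CoveringDimLE.exists_shrinking_of_iUnion_eq_setOf_pos {Y : Type*} [TopologicalSpace Y]
    {n : ℕ} (hdim : CoveringDimLE Y n) {ρ : Y → ℝ} (hρ : Continuous ρ) {ι : Type}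
    {U : ι → Set Y} (hU : ∀ i, IsOpen (U i)) (hUρ : ⋃ i, U i = {y | 0 < ρ y}) :
    ∃ V : ι → Set Y, (∀ i, IsOpen (V i)) ∧ (∀ i, V i ⊆ U i) ∧ ⋃ i, V i = ⋃ i, U i ∧
      ∀ x, {i | x ∈ V i}.encard ≤ n + 1 :=
  hdim.exists_shrinking_of_locallyFinite_closed hU (isClosed_dyadicShell hρ)
    (hUρ ▸ iUnion_dyadicShell ρ) fun x hx =>
      exists_mem_nhds_finite_dyadicShell hρ (show x ∈ {y | 0 < ρ y} from hUρ ▸ hx)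

section Whitney

variable {Y : Type*} [MetricSpace Y]

theorem exists_anchored_ball_cover [TopologicalSpace.SeparableSpace Y] {K : Set Y}
    (hK : IsClosed K) (hne : K.Nonempty) :
    ∃ (B : ℕ → Set Y) (a : ℕ → K), (∀ i, IsOpen (B i)) ∧ ⋃ i, B i = Kᶜ ∧
      ∀ i, ∀ y ∈ B i, dist y (a i) ≤ 2 * infDist y K := by
  have : Nonempty Y := ⟨hne.some⟩
  obtain ⟨u, hu⟩ := TopologicalSpace.exists_dense_seq Y
  have hanchor : ∀ i, ∃ a : K, ∀ y ∈ ball (u i) (infDist (u i) K / 8),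
      dist y a ≤ 2 * infDist y K := by
    intro i
    rcases (ball (u i) (infDist (u i) K / 8)).eq_empty_or_nonempty with h | h
    · exact ⟨⟨_, hne.some_mem⟩, by simp [h]⟩
    have hd : 0 < infDist (u i) K := by linarith [nonempty_ball.1 h]
    obtain ⟨a, ha, hua⟩ := (infDist_lt_iff hne).1
      (by linarith : infDist (u i) K < 9 / 8 * infDist (u i) K)
    refine ⟨⟨a, ha⟩, fun y hy => ?_⟩
    have hy' := infDist_le_infDist_add_dist (x := u i) (y := y) (s := K)
    rw [mem_ball] at hy
    rw [dist_comm] at hy'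
    linarith [dist_triangle y (u i) a]
  choose a ha using hanchor
  refine ⟨_, a, fun i => isOpen_ball, subset_antisymm (iUnion_subset fun i y hy hyK => ?_)
    fun x hx => ?_, ha⟩
  · have := infDist_le_dist_of_mem (x := u i) hyK
    rw [mem_ball, dist_comm] at hy
    linarith [infDist_nonneg (x := u i) (s := K)]
  · have hx' : 0 < infDist x K := (hK.notMem_iff_infDist_pos hne).1 hx
    obtain ⟨i, hi⟩ := hu.exists_dist_lt x (by positivity : 0 < infDist x K / 16)
    have := infDist_le_infDist_add_dist (x := x) (y := u i) (s := K)
    exact mem_iUnion.2 ⟨i, mem_ball.2 (by linarith)⟩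

theorem exists_locallyFinite_shrinking_of_isOpen {O : Set Y} (hO : IsOpen O) {ι : Type*}
    {U : ι → Set Y} (hU : ∀ i, IsOpen (U i)) (hUO : ⋃ i, U i = O) :
    ∃ V : ι → Set Y, (∀ i, IsOpen (V i)) ∧ (∀ i, V i ⊆ U i) ∧ ⋃ i, V i = O ∧
      ∀ x ∈ O, ∃ t ∈ 𝓝 x, {i | (V i ∩ t).Nonempty}.Finite := by
  obtain ⟨v, hvo, hvcov, hvlf, hvU⟩ := precise_refinement (fun i => ((↑) : O → Y) ⁻¹' U i)
    (fun i => (hU i).preimage continuous_subtype_val)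
    (by simp only [← preimage_iUnion, hUO, Subtype.coe_preimage_self])
  refine ⟨fun i => (↑) '' v i, fun i => hO.isOpenMap_subtype_val _ (hvo i),
    fun i => image_subset_iff.2 (hvU i), ?_, fun x hx => ?_⟩
  · rw [← image_iUnion, hvcov, image_univ, Subtype.range_coe]
  · obtain ⟨t, ht, hfin⟩ := hvlf ⟨x, hx⟩
    refine ⟨(↑) '' t, hO.isOpenMap_subtype_val.image_mem_nhds ht, hfin.subset ?_⟩
    rintro i ⟨_, ⟨y, hy, rfl⟩, ⟨z, hz, hzy⟩⟩
    exact ⟨y, hy, Subtype.val_injective hzy ▸ hz⟩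

end Whitney

def UniformlyLocPathConnected (X : Type*) [PseudoMetricSpace X] : Prop :=
  ∀ ε > 0, ∃ δ > 0, ∀ x y : X, dist x y < δ → ∃ p : Path x y, ∀ t, dist (p t) x < ε

namespace UniformlyLocPathConnected

variable {X : Type*} [MetricSpace X] [PathConnectedSpace X]

theorem exists_small_paths (hX : UniformlyLocPathConnected X) :
    ∃ p : ∀ x y : X, Path x y, ∀ ε > 0, ∃ δ > 0, ∀ x y, x ≠ y → dist x y < δ →
      ∀ t, dist (p x y t) x < ε := by
  -- `p x y` is a path of radius `1 / (N + 1)` for the largest possible `N`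
  let reach : X → X → Set ℕ := fun x y =>
    {n | ∃ q : Path x y, ∀ t, dist (q t) x < 1 / ((n : ℝ) + 1)}
  have hsel : ∀ x y, ∃ p : Path x y, sSup (reach x y) ∈ reach x y →
      ∀ t, dist (p t) x < 1 / ((sSup (reach x y) : ℕ) + 1 : ℝ) := fun x y => by
    by_cases hm : sSup (reach x y) ∈ reach x y
    · obtain ⟨q, hq⟩ := hm
      exact ⟨q, fun _ => hq⟩
    · exact ⟨PathConnectedSpace.somePath x y, fun h => absurd h hm⟩
  choose p hp using hsel
  refine ⟨p, fun ε hε => ?_⟩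
  obtain ⟨n, hn⟩ := exists_nat_one_div_lt hε
  obtain ⟨δ, hδ, hpath⟩ := hX _ (Nat.one_div_pos_of_nat (n := n))
  refine ⟨δ, hδ, fun x y hxy hd t => ?_⟩
  have hn_mem : n ∈ reach x y := hpath x y hd
  have hbdd : BddAbove (reach x y) := by
    obtain ⟨N, hN⟩ := exists_nat_one_div_lt (dist_pos.2 hxy)
    refine ⟨N, fun m ⟨q, hq⟩ => ?_⟩
    by_contra! hNm
    have := hq 1
    rw [q.target, dist_comm] at this
    have : 1 / ((m : ℝ) + 1) ≤ 1 / ((N : ℝ) + 1) := by gcongr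
    linarith
  calc dist (p x y t) x < 1 / ((sSup (reach x y) : ℕ) + 1 : ℝ) :=
        hp x y (Nat.sSup_mem ⟨n, hn_mem⟩ hbdd) t
    _ ≤ 1 / ((n : ℝ) + 1) := by gcongr; exact le_csSup hbdd hn_mem
    _ < ε := hn

theorem exists_small_symm_paths (hX : UniformlyLocPathConnected X) :
    ∃ γ : ∀ x y : X, Path x y, (∀ x, γ x x = Path.refl x) ∧ (∀ x y, γ y x = (γ x y).symm) ∧
      ∀ ε > 0, ∃ δ > 0, ∀ x y, dist x y < δ → ∀ t, dist (γ x y t) x < ε := by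
  classical
  obtain ⟨p, hp⟩ := hX.exists_small_paths
  let : LinearOrder X := linearOrderOfSTO WellOrderingRel
  refine ⟨fun x y => if h : x = y then (Path.refl x).cast rfl h.symm
    else if x < y then p x y else (p y x).symm, fun x => by simp, fun x y => ?_, ?_⟩
  · rcases lt_trichotomy x y with h | rfl | h
    · simp [h.ne, h.ne', h.not_gt, h]
    · simp
    · simp [h.ne, h.ne', h.not_gt, h]
  · intro ε hε
    obtain ⟨δ, hδ, hpδ⟩ := hp (ε / 2) (half_pos hε)
    refine ⟨min δ (ε / 2), lt_min hδ (half_pos hε), fun x y hxy t => ?_⟩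
    have hxy₁ := hxy.trans_le (min_le_left _ _)
    have hxy₂ := hxy.trans_le (min_le_right _ _)
    rcases lt_trichotomy x y with h | rfl | h
    · simp only [h.ne, h, dite_false, if_true]
      linarith [hpδ x y h.ne hxy₁ t]
    · simpa using hε
    · simp only [h.ne', h.not_gt, dite_false, if_false, Path.symm_apply, Function.comp_apply]
      have := hpδ y x h.ne (by rwa [dist_comm]) (unitInterval.symm t)
      linarith [dist_triangle (p y x (unitInterval.symm t)) y x, dist_comm x y]

end UniformlyLocPathConnected

theorem norm_inv_norm_smul_sub_le {E : Type*} [NormedAddCommGroup E] [NormedSpace ℝ E] {a : E}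
    (ha : ‖a‖ = 1) (v : E) : ‖‖v‖⁻¹ • v - a‖ ≤ 2 * ‖v - a‖ := by
  have hv : ‖‖v‖⁻¹ • v - v‖ ≤ ‖v - a‖ := by
    rcases eq_or_ne v 0 with rfl | hv
    · simp
    have hn : 0 < ‖v‖ := norm_pos_iff.2 hv
    calc ‖‖v‖⁻¹ • v - v‖ = |‖v‖⁻¹ - 1| * ‖v‖ := by
          rw [← Real.norm_eq_abs, ← norm_smul, sub_smul, one_smul]
      _ = |1 - ‖v‖| := by
          rw [← abs_of_pos hn, ← abs_mul, abs_of_pos hn, sub_mul, inv_mul_cancel₀ hn.ne', one_mul]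
      _ = |‖a‖ - ‖v‖| := by rw [ha]
      _ ≤ ‖v - a‖ := by rw [norm_sub_rev]; exact abs_norm_sub_norm_le a v
  linarith [norm_sub_le_norm_sub_add_norm_sub (‖v‖⁻¹ • v) v a]

theorem uniformlyLocPathConnected_sphere {E : Type*} [NormedAddCommGroup E] [NormedSpace ℝ E] :
    UniformlyLocPathConnected (sphere (0 : E) 1) := by
  intro ε hε
  refine ⟨min (ε / 2) 1, by positivity, fun a b hab => ?_⟩
  have ha : ‖(a : E)‖ = 1 := mem_sphere_zero_iff_norm.1 a.2
  have hab' : ‖(b : E) - a‖ < min (ε / 2) 1 := by rwa [← dist_eq_norm, dist_comm]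
  have hseg : ∀ t, ‖Path.segment (a : E) b t - a‖ ≤ ‖(b : E) - a‖ := fun t => by
    rw [← dist_eq_norm, Path.segment_apply, dist_lineMap_left, ← dist_eq_norm', Real.norm_eq_abs,
      abs_of_nonneg t.2.1]
    exact mul_le_of_le_one_left dist_nonneg t.2.2
  have hne : ∀ t, Path.segment (a : E) b t ≠ 0 := fun t h => by
    have := hseg t
    rw [h, zero_sub, norm_neg, ha] at this
    linarith [min_le_right (ε / 2) 1]
  refine ⟨{ toFun := fun t => ⟨‖Path.segment (a : E) b t‖⁻¹ • Path.segment (a : E) b t,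
              mem_sphere_zero_iff_norm.2 (norm_smul_inv_norm (hne t))⟩
            continuous_toFun := (((Path.segment _ _).continuous.norm.inv₀
              fun t => norm_ne_zero_iff.2 (hne t)).smul (Path.segment _ _).continuous).subtype_mk _
            source' := by ext; simp [ha]
            target' := by ext; simp [mem_sphere_zero_iff_norm.1 b.2] }, fun t => ?_⟩
  calc dist _ a = ‖‖Path.segment (a : E) b t‖⁻¹ • Path.segment (a : E) b t - a‖ := dist_eq_norm ..
    _ ≤ 2 * ‖Path.segment (a : E) b t - a‖ := norm_inv_norm_smul_sub_le ha _
    _ < ε := by linarith [hseg t, min_le_left (ε / 2) 1]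

section Compact

variable {X Z : Type*} [MetricSpace X] [CompactSpace X] [MetricSpace Z] {f : X → Z}

theorem Continuous.exists_pos_near_eq_of_dist_lt (hf : Continuous f) {τ : ℝ} (hτ : 0 < τ) :
    ∃ δ > 0, ∀ a b, dist (f a) (f b) < δ →
      ∃ a' b', f a' = f b' ∧ dist a a' < τ ∧ dist b b' < τ := by
  by_contra! H
  choose a b hab hfar using fun k : ℕ => H (1 / ((k : ℝ) + 1)) Nat.one_div_pos_of_nat
  obtain ⟨⟨α, β⟩, φ, hφ, hlim⟩ := CompactSpace.tendsto_subseq fun k => (a k, b k)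
  have hα : Tendsto (a ∘ φ) atTop (𝓝 α) := (continuous_fst.tendsto _).comp hlim
  have hβ : Tendsto (b ∘ φ) atTop (𝓝 β) := (continuous_snd.tendsto _).comp hlim
  have hfαβ : f α = f β := by
    refine dist_eq_zero.1 (tendsto_nhds_unique
      (((hf.tendsto α).comp hα).dist ((hf.tendsto β).comp hβ)) ?_)
    exact squeeze_zero (fun _ => dist_nonneg) (fun k => (hab (φ k)).le)
      (tendsto_one_div_add_atTop_nhds_zero_nat.comp hφ.tendsto_atTop)
  obtain ⟨k, hka, hkb⟩ := ((tendsto_nhds.1 hα τ hτ).and (tendsto_nhds.1 hβ τ hτ)).exists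
  exact (hfar (φ k) α β hfαβ hka).not_gt hkb

theorem UniformlyLocPathConnected.of_surjective (hX : UniformlyLocPathConnected X)
    (hf : Continuous f) (hsurj : Function.Surjective f) : UniformlyLocPathConnected Z := by
  intro ε hε
  obtain ⟨η, hη, hfη⟩ := Metric.uniformContinuous_iff.1
    (CompactSpace.uniformContinuous_of_continuous hf) (ε / 2) (half_pos hε)
  obtain ⟨δX, hδX, hpath⟩ := hX η hη
  obtain ⟨δ, hδ, hnear⟩ := hf.exists_pos_near_eq_of_dist_lt hδX
  refine ⟨δ, hδ, fun z w hzw => ?_⟩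
  obtain ⟨a, rfl⟩ := hsurj z
  obtain ⟨b, rfl⟩ := hsurj w
  obtain ⟨α, β, hαβ, haα, hbβ⟩ := hnear a b hzw
  obtain ⟨p, hp⟩ := hpath a α haα
  obtain ⟨q, hq⟩ := hpath β b (by rwa [dist_comm])
  refine ⟨(p.map hf).trans ((q.map hf).cast hαβ rfl), fun t => ?_⟩
  have hαa : dist (f α) (f a) < ε / 2 := hfη (by simpa using hp 1)
  obtain ⟨s, hs⟩ | ⟨s, hs⟩ := (Path.trans_range (p.map hf) ((q.map hf).cast hαβ rfl)).subset
    (mem_range_self t)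
  · rw [← hs]
    exact (hfη (hp s)).trans (half_lt_self hε)
  · rw [← hs, Path.cast_coe, Path.map_coe, Function.comp_apply]
    have := hfη (hq s)
    rw [← hαβ] at this
    linarith [dist_triangle (f (q s)) (f α) (f a)]

end Compact

/-- An open cover of `Kᶜ` whose nerve is a graph (order `≤ 2`), realized in `K`: vertex `i` by an
anchor `a i` and edge `{s, t}` by a path `γ s t`. Mapping through this realization retracts `Y`
onto `K`. -/
structure NerveRetractionData {Y : Type*} [MetricSpace Y] (K : Set Y) where
  U : ℕ → Set Y
  a : ℕ → Y
  γ : ∀ s t, Path (a s) (a t)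
  isOpen : ∀ i, IsOpen (U i)
  iUnion_eq : ⋃ i, U i = Kᶜ
  encard_le : ∀ y, {i | y ∈ U i}.encard ≤ 2
  locallyFinite : ∀ x ∉ K, ∃ t ∈ 𝓝 x, {i | (U i ∩ t).Nonempty}.Finite
  dist_le : ∀ i, ∀ y ∈ U i, dist y (a i) ≤ 2 * infDist y K
  mem : ∀ s t τ, γ s t τ ∈ K
  refl : ∀ s, γ s s = Path.refl (a s)
  symm : ∀ s t, γ t s = (γ s t).symm
  small : ∀ ε > 0, ∃ δ > 0, ∀ s t, dist (a s) (a t) < δ → ∀ τ, dist (γ s t τ) (a s) < ε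

namespace NerveRetractionData

variable {Y : Type*} [MetricSpace Y] {K : Set Y} (D : NerveRetractionData K)

noncomputable def weight (i : ℕ) (y : Y) : ℝ := infDist y (D.U i)ᶜ

noncomputable def pairMap (s t : ℕ) (y : Y) : Y :=
  (D.γ s t).extend (D.weight t y / (D.weight s y + D.weight t y))

open scoped Classical in
noncomputable def retraction (y : Y) : Y :=
  if y ∈ K then y
  else if h : ∃ s t, {i | y ∈ D.U i} = {s, t} then D.pairMap h.choose h.choose_spec.choose y
  -- unreachable: every point of `Kᶜ` lies in one or two of the `U i`
  else y

theorem subset_compl (i : ℕ) : D.U i ⊆ Kᶜ := D.iUnion_eq ▸ subset_iUnion D.U i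

theorem weight_pos {i : ℕ} {y : Y} (hy : y ∈ D.U i) : 0 < D.weight i y :=
  ((D.isOpen i).isClosed_compl.notMem_iff_infDist_pos
    ⟨_, subset_compl_comm.1 (D.subset_compl i) (D.mem 0 0 0)⟩).1 (not_not.2 hy)

theorem weight_eq_zero {i : ℕ} {y : Y} (hy : y ∉ D.U i) : D.weight i y = 0 :=
  infDist_zero_of_mem hy

theorem continuous_weight (i : ℕ) : Continuous (D.weight i) := continuous_infDist_pt _

theorem weight_add_pos {s t : ℕ} {y : Y} (hy : y ∈ D.U s) : 0 < D.weight s y + D.weight t y :=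
  add_pos_of_pos_of_nonneg (D.weight_pos hy) infDist_nonneg

theorem pairMap_comm {s t : ℕ} {y : Y} (hy : y ∈ D.U s) :
    D.pairMap s t y = D.pairMap t s y := by
  have hpos := D.weight_add_pos (t := t) hy
  simp only [pairMap, D.symm s t, Path.extend_symm]
  congr 1
  rw [add_comm (D.weight t y), eq_sub_iff_add_eq, ← add_div, add_comm, div_self hpos.ne']

theorem pairMap_self (s : ℕ) (y : Y) : D.pairMap s s y = D.a s := by
  simp [pairMap, D.refl]

theorem pairMap_of_notMem {s t : ℕ} {y : Y} (hy : y ∉ D.U t) : D.pairMap s t y = D.a s := by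
  simp [pairMap, D.weight_eq_zero hy]

theorem exists_pairMap_eq (s t : ℕ) (y : Y) : ∃ τ, D.pairMap s t y = D.γ s t τ :=
  let ⟨τ, h⟩ := ((D.γ s t).extend_range ▸ mem_range_self _ : D.pairMap s t y ∈ range (D.γ s t))
  ⟨τ, h.symm⟩

theorem continuousAt_pairMap {s : ℕ} (t : ℕ) {x : Y} (hx : x ∈ D.U s) :
    ContinuousAt (D.pairMap s t) x :=
  (D.γ s t).continuous_extend.continuousAt.comp <| (D.continuous_weight t).continuousAt.div
    ((D.continuous_weight s).add (D.continuous_weight t)).continuousAt (D.weight_add_pos hx).ne'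

theorem exists_eq_pair {s : ℕ} {y : Y} (hy : y ∈ D.U s) : ∃ t, {i | y ∈ D.U i} = {s, t} :=
  exists_eq_pair_of_encard_le_two hy (D.encard_le y)

theorem retraction_of_mem {y : Y} (hy : y ∈ K) : D.retraction y = y := if_pos hy

theorem retraction_eq_pairMap {s t : ℕ} {y : Y} (hy : y ∈ D.U s)
    (hst : {i | y ∈ D.U i} = {s, t}) : D.retraction y = D.pairMap s t y := by
  have h : ∃ s t, {i | y ∈ D.U i} = {s, t} := ⟨s, t, hst⟩
  rw [retraction, if_neg (D.subset_compl s hy), dif_pos h]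
  suffices ∀ s' t', {i | y ∈ D.U i} = {s', t'} → D.pairMap s' t' y = D.pairMap s t y from
    this _ _ h.choose_spec.choose_spec
  intro s' t' h'
  rcases pair_eq_pair_iff.1 (h'.symm.trans hst) with ⟨rfl, rfl⟩ | ⟨rfl, rfl⟩
  · rfl
  · exact (D.pairMap_comm hy).symm

theorem exists_retraction_eq {y : Y} (hy : y ∉ K) :
    ∃ s t, y ∈ D.U s ∧ y ∈ D.U t ∧ D.retraction y = D.pairMap s t y := by
  obtain ⟨s, hs⟩ := mem_iUnion.1 (D.iUnion_eq ▸ hy : y ∈ ⋃ i, D.U i)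
  obtain ⟨t, hst⟩ := D.exists_eq_pair hs
  exact ⟨s, t, hs, (show t ∈ {i | y ∈ D.U i} from hst ▸ mem_insert_of_mem s rfl),
    D.retraction_eq_pairMap hs hst⟩

theorem retraction_mem (y : Y) : D.retraction y ∈ K := by
  by_cases hy : y ∈ K
  · rwa [D.retraction_of_mem hy]
  obtain ⟨s, t, -, -, h⟩ := D.exists_retraction_eq hy
  obtain ⟨τ, hτ⟩ := D.exists_pairMap_eq s t y
  exact h ▸ hτ ▸ D.mem s t τ

theorem continuousAt_retraction_of_notMem {x : Y} (hx : x ∉ K) :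
    ContinuousAt D.retraction x := by
  obtain ⟨s, hs⟩ := mem_iUnion.1 (D.iUnion_eq ▸ hx : x ∈ ⋃ i, D.U i)
  obtain ⟨t, hxst⟩ := D.exists_eq_pair hs
  have hUs : ∀ᶠ y in 𝓝 x, y ∈ D.U s := (D.isOpen s).mem_nhds hs
  rcases eq_or_ne s t with rfl | hst
  · -- near `x`, the retraction is one of finitely many `pairMap s u`, all equal to `a s` at `x`
    have hval : ∀ u, D.pairMap s u x = D.retraction x := fun u => by
      rw [D.retraction_eq_pairMap hs hxst, D.pairMap_self]
      rcases eq_or_ne u s with rfl | hus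
      · exact D.pairMap_self u x
      · refine D.pairMap_of_notMem fun hxu => hus ?_
        simpa [hxst] using (show u ∈ {i | x ∈ D.U i} from hxu)
    obtain ⟨t, ht, hfin⟩ := D.locallyFinite x hx
    refine tendsto_of_eventually_exists_finite (g := D.pairMap s) hfin (fun u _ => ?_) ?_
    · have := (D.continuousAt_pairMap u hs).tendsto
      rwa [hval u] at this
    filter_upwards [hUs, ht] with y hys hyt
    obtain ⟨u, hyu⟩ := D.exists_eq_pair hys
    have hyU : y ∈ D.U u := show u ∈ {i | y ∈ D.U i} from hyu ▸ mem_insert_of_mem s rfl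
    exact ⟨u, ⟨y, hyU, hyt⟩, D.retraction_eq_pairMap hys hyu⟩
  · -- near `x`, every point lies exactly in `U s` and `U t`
    have hxt : x ∈ D.U t := show t ∈ {i | x ∈ D.U i} from hxst ▸ mem_insert_of_mem s rfl
    refine (D.continuousAt_pairMap t hs).congr ?_
    filter_upwards [hUs, (D.isOpen t).mem_nhds hxt] with y hys hyt
    obtain ⟨u, hyu⟩ := D.exists_eq_pair hys
    have hut : t = u := by
      have : t ∈ ({s, u} : Set ℕ) := hyu ▸ hyt
      simpa [hst.symm] using this
    rw [D.retraction_eq_pairMap hys (hut ▸ hyu)]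

theorem continuousAt_retraction_of_mem {x : Y} (hx : x ∈ K) : ContinuousAt D.retraction x := by
  rw [Metric.continuousAt_iff]
  intro ε hε
  obtain ⟨δ, hδ, hsmall⟩ := D.small (ε / 2) (half_pos hε)
  refine ⟨min (δ / 4) (ε / 8), by positivity, fun y hy => ?_⟩
  have hy₁ : dist y x < δ / 4 := hy.trans_le (min_le_left _ _)
  have hy₂ : dist y x < ε / 8 := hy.trans_le (min_le_right _ _)
  rw [D.retraction_of_mem hx]
  by_cases hyK : y ∈ K
  · rw [D.retraction_of_mem hyK]
    linarith
  obtain ⟨s, t, hys, hyt, hr⟩ := D.exists_retraction_eq hyK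
  obtain ⟨τ, hτ⟩ := D.exists_pairMap_eq s t y
  have hd : infDist y K ≤ dist y x := infDist_le_dist_of_mem hx
  have hs := D.dist_le s y hys
  have ht := D.dist_le t y hyt
  have hst : dist (D.a s) (D.a t) < δ := by
    linarith [dist_triangle (D.a s) y (D.a t), dist_comm (D.a s) y]
  have := hsmall s t hst τ
  rw [hr, hτ]
  linarith [dist_triangle4 (D.γ s t τ) (D.a s) y x, dist_comm (D.a s) y]

theorem continuous_retraction : Continuous D.retraction :=
  continuous_iff_continuousAt.2 fun x => by
    by_cases hx : x ∈ K
    exacts [D.continuousAt_retraction_of_mem hx, D.continuousAt_retraction_of_notMem hx]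

end NerveRetractionData

theorem exists_retraction_of_coveringDimLE_one {Y : Type*} [MetricSpace Y]
    [TopologicalSpace.SeparableSpace Y] (hdim : CoveringDimLE Y 1) {K : Set Y} (hK : IsClosed K)
    (hne : K.Nonempty) (hKp : IsPathConnected K) (hKu : UniformlyLocPathConnected K) :
    ∃ r : Y → Y, Continuous r ∧ (∀ y, r y ∈ K) ∧ ∀ y ∈ K, r y = y := by
  obtain ⟨B, a, hBo, hBK, ha⟩ := exists_anchored_ball_cover hK hne
  obtain ⟨W, hWo, hWB, hWK, hWlf⟩ :=
    exists_locallyFinite_shrinking_of_isOpen hK.isOpen_compl hBo hBK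
  obtain ⟨U, hUo, hUW, hUK, hord⟩ := hdim.exists_shrinking_of_iUnion_eq_setOf_pos
    (continuous_infDist_pt K) hWo (hWK.trans (by ext; exact hK.notMem_iff_infDist_pos hne))
  have := isPathConnected_iff_pathConnectedSpace.1 hKp
  obtain ⟨σ, hσrefl, hσsymm, hσsmall⟩ := hKu.exists_small_symm_paths
  let D : NerveRetractionData K :=
    { U, a := fun i => a i, γ := fun s t => (σ (a s) (a t)).map continuous_subtype_val
      isOpen := hUo
      iUnion_eq := hUK.trans hWK
      encard_le := fun y => (hord y).trans (by norm_num)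
      locallyFinite := fun x hx =>
        let ⟨t, ht, hfin⟩ := hWlf x hx
        ⟨t, ht, hfin.subset fun i ⟨y, hy, hyt⟩ => ⟨y, hUW i hy, hyt⟩⟩
      dist_le := fun i y hy => ha i y (hWB i (hUW i hy))
      mem := fun s t τ => (σ (a s) (a t) τ).2
      refl := fun s => by rw [hσrefl]; rfl
      symm := fun s t => by rw [hσsymm, Path.map_symm]
      small := fun ε hε =>
        let ⟨δ, hδ, h⟩ := hσsmall ε hε
        ⟨δ, hδ, fun s t => h (a s) (a t)⟩ }
  exact ⟨D.retraction, D.continuous_retraction, D.retraction_mem, fun _ => D.retraction_of_mem⟩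

theorem nullhomotopic_extends_with_same_image_general
    {Y : Type*} [MetricSpace Y] [CompactSpace Y] (hdim : CoveringDimLE Y 1)
    (f : ℝ × ℝ → Y) (hf : ContinuousOn f (Metric.sphere (0 : ℝ × ℝ) 1))
    (hnull : ∃ g : ℝ × ℝ → Y, ContinuousOn g (Metric.closedBall (0 : ℝ × ℝ) 1) ∧
      ∀ x ∈ Metric.sphere (0 : ℝ × ℝ) 1, g x = f x) :
    ∃ h : ℝ × ℝ → Y, ContinuousOn h (Metric.closedBall (0 : ℝ × ℝ) 1) ∧
      (∀ x ∈ Metric.sphere (0 : ℝ × ℝ) 1, h x = f x) ∧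
      h '' Metric.closedBall (0 : ℝ × ℝ) 1 = f '' Metric.sphere (0 : ℝ × ℝ) 1 ∧
      Metric.diam (h '' Metric.closedBall (0 : ℝ × ℝ) 1) =
        Metric.diam (f '' Metric.sphere (0 : ℝ × ℝ) 1) := by
  obtain ⟨g, hg, hgf⟩ := hnull
  have hS : IsCompact (sphere (0 : ℝ × ℝ) 1) := isCompact_sphere 0 1
  have hKp : IsPathConnected (f '' sphere (0 : ℝ × ℝ) 1) :=
    (isPathConnected_sphere (by rw [rank_prod, Module.rank_self]; norm_num) 0 zero_le_one).image' hf
  have hKu : UniformlyLocPathConnected (f '' sphere (0 : ℝ × ℝ) 1) := by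
    have := isCompact_iff_compactSpace.1 hS
    exact uniformlyLocPathConnected_sphere.of_surjective (hf.mapsToRestrict (mapsTo_image f _))
      (surjective_mapsTo_image_restrict f _)
  obtain ⟨r, hr, hrK, hrid⟩ := exists_retraction_of_coveringDimLE_one hdim
    (hS.image_of_continuousOn hf).isClosed hKp.nonempty hKp hKu
  have hrg : ∀ x ∈ sphere (0 : ℝ × ℝ) 1, r (g x) = f x := fun x hx => by
    rw [hgf x hx]; exact hrid _ (mem_image_of_mem f hx)
  have himg : (r ∘ g) '' closedBall (0 : ℝ × ℝ) 1 = f '' sphere (0 : ℝ × ℝ) 1 :=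
    subset_antisymm (image_subset_iff.2 fun x _ => hrK (g x))
      (by rintro _ ⟨x, hx, rfl⟩; exact ⟨x, sphere_subset_closedBall hx, hrg x hx⟩)
  exact ⟨r ∘ g, hr.comp_continuousOn hg, hrg, himg, by rw [himg]⟩

/-- A null-homotopic loop on the boundary circle of the disc, with values in a one-dimensional
Peano continuum, extends to the disc with image equal to the image of the loop; in particular
the extension has the same diameter. -/
theorem nullhomotopic_extends_with_same_image
    {Y : Type*} [MetricSpace Y] [CompactSpace Y] [ConnectedSpace Y]
    [LocallyConnectedSpace Y] (hdim : CoveringDimLE Y 1)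
    (f : ℝ × ℝ → Y) (hf : ContinuousOn f (Metric.sphere (0 : ℝ × ℝ) 1))
    (hnull : ∃ g : ℝ × ℝ → Y, ContinuousOn g (Metric.closedBall (0 : ℝ × ℝ) 1) ∧
      ∀ x ∈ Metric.sphere (0 : ℝ × ℝ) 1, g x = f x) :
    ∃ h : ℝ × ℝ → Y, ContinuousOn h (Metric.closedBall (0 : ℝ × ℝ) 1) ∧
      (∀ x ∈ Metric.sphere (0 : ℝ × ℝ) 1, h x = f x) ∧
      h '' Metric.closedBall (0 : ℝ × ℝ) 1 = f '' Metric.sphere (0 : ℝ × ℝ) 1 ∧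
      Metric.diam (h '' Metric.closedBall (0 : ℝ × ℝ) 1) =
        Metric.diam (f '' Metric.sphere (0 : ℝ × ℝ) 1) :=
  nullhomotopic_extends_with_same_image_general hdim f hf hnull
end

section
/- Let α : I → ℝ² be a continuous path and U ⊆ ℝ² open with α(0), α(1) ∉ U. Then α⁻¹(U) is a countable disjoint union of open intervals (a_n, b_n) with α(a_n), α(b_n) ∈ ∂U, and the path α' obtained by replacing α on each [a_n, b_n] with the constant-speed line segment from α(a_n) to α(b_n) is continuous, provided the diameters of the sets α([a_n,b_n]) ∪ [α(a_n), α(b_n)] form a null sequence (which holds automatically by uniform continuity of α). -/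
/-!
The set `S` of times at which `α` lies in `U` is an open subset of `(0, 1)`. Its connected
components are countably many disjoint open intervals, whose endpoints lie in `∂S` and are
therefore mapped to `∂U`. Replacing `α` by chords on these intervals preserves continuity: near a
time `t₀` outside every interval, a time `t` inside some interval `(a, b)` is separated from `t₀`
by an endpoint `c`, and the chord at `t` stays close to `α c`, because either the interval is
short and uniform continuity makes the whole chord short, or it is long and the chord is traversed
slowly.
-/

open Set Function Bornology

theorem IsOpen.eq_Ioo_csInf_csSup {α : Type*} [ConditionallyCompleteLinearOrder α]
    [TopologicalSpace α] [OrderTopology α] [DenselyOrdered α] [NoMinOrder α] [NoMaxOrder α]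
    {C : Set α} (hC : IsOpen C) (hc : IsConnected C) (hb : BddBelow C) (ha : BddAbove C) :
    C = Ioo (sInf C) (sSup C) := by
  refine subset_antisymm (fun x hx => ?_) (hc.Ioo_csInf_csSup_subset hb ha)
  obtain ⟨l, u, ⟨hl, hu⟩, hsub⟩ := mem_nhds_iff_exists_Ioo_subset.1 (hC.mem_nhds hx)
  obtain ⟨y, hly, hyx⟩ := exists_between hl
  obtain ⟨z, hxz, hzu⟩ := exists_between hu
  exact ⟨(csInf_le hb (hsub ⟨hly, hyx.trans hu⟩)).trans_lt hyx,
    hxz.trans_le (le_csSup ha (hsub ⟨hl.trans hxz, hzu⟩))⟩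

theorem IsOpen.exists_connectedComponentIn_eq_Ioo {S : Set ℝ} (hS : IsOpen S) (hb : IsBounded S)
    {t : ℝ} (ht : t ∈ S) :
    ∃ l u, l < u ∧ connectedComponentIn S t = Ioo l u ∧ l ∈ frontier S ∧ u ∈ frontier S := by
  have hCS : connectedComponentIn S t ⊆ S := connectedComponentIn_subset S t
  obtain ⟨l, u, hC⟩ : ∃ l u, connectedComponentIn S t = Ioo l u :=
    ⟨_, _, hS.connectedComponentIn.eq_Ioo_csInf_csSup (isConnected_connectedComponentIn_iff.2 ht)
      (hb.subset hCS).bddBelow (hb.subset hCS).bddAbove⟩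
  rw [hC] at hCS
  have htC : t ∈ Ioo l u := hC ▸ mem_connectedComponentIn ht
  have hlu : l < u := htC.1.trans htC.2
  have hcl : Icc l u ⊆ closure S := closure_Ioo hlu.ne ▸ closure_mono hCS
  -- an endpoint in `S` would enlarge the component to a half-closed interval
  have hl : l ∉ S := fun hlS => by
    have := isPreconnected_Ico.subset_connectedComponentIn (Ioo_subset_Ico_self htC)
      (Ioo_union_left hlu ▸ union_subset hCS (singleton_subset_iff.2 hlS))
    rw [hC] at this
    exact (this (left_mem_Ico.2 hlu)).1.false
  have hu : u ∉ S := fun huS => by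
    have := isPreconnected_Ioc.subset_connectedComponentIn (Ioo_subset_Ioc_self htC)
      (Ioo_union_right hlu ▸ union_subset hCS (singleton_subset_iff.2 huS))
    rw [hC] at this
    exact (this (right_mem_Ioc.2 hlu)).2.false
  rw [hS.frontier_eq]
  exact ⟨l, u, hlu, hC, ⟨hcl (left_mem_Icc.2 hlu.le), hl⟩, ⟨hcl (right_mem_Icc.2 hlu.le), hu⟩⟩

theorem IsOpen.exists_eq_iUnion_Ioo_nat {S : Set ℝ} (hS : IsOpen S) (hb : IsBounded S) (c : ℝ) :
    ∃ a b : ℕ → ℝ, Pairwise (Disjoint on fun n => Ioo (a n) (b n)) ∧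
      S = ⋃ n, Ioo (a n) (b n) ∧
      ∀ n, (a n = c ∧ b n = c) ∨ (a n < b n ∧ a n ∈ frontier S ∧ b n ∈ frontier S) := by
  set 𝒞 := connectedComponentIn S '' S
  have hdisj : 𝒞.PairwiseDisjoint id := by
    rintro _ ⟨x, -, rfl⟩ _ ⟨y, -, rfl⟩ hne
    exact disjoint_left.2 fun z hzx hzy =>
      hne ((connectedComponentIn_eq hzx).trans (connectedComponentIn_eq hzy).symm)
  have : Countable 𝒞 :=
    (hdisj.countable_of_isOpen (fun _ ⟨_, _, hC⟩ => hC ▸ hS.connectedComponentIn)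
      (fun _ ⟨_, hx, hC⟩ => hC ▸ ⟨_, mem_connectedComponentIn hx⟩)).to_subtype
  obtain ⟨e, he⟩ := exists_injective_nat 𝒞
  choose l u hlu hC hl hu using fun C : 𝒞 =>
    have ⟨x, hx, hCx⟩ := C.2; hCx ▸ hS.exists_connectedComponentIn_eq_Ioo hb hx
  have hIoo (C : 𝒞) : Ioo (extend e l (fun _ => c) (e C)) (extend e u (fun _ => c) (e C)) = C := by
    rw [he.extend_apply, he.extend_apply, hC]
  have hfiller (n : ℕ) (hn : ¬∃ C, e C = n) :
      extend e l (fun _ => c) n = c ∧ extend e u (fun _ => c) n = c :=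
    ⟨extend_apply' _ _ _ hn, extend_apply' _ _ _ hn⟩
  refine ⟨extend e l fun _ => c, extend e u fun _ => c, fun m n hmn => ?_, ?_, fun n => ?_⟩
  · by_cases hm : ∃ C, e C = m
    · by_cases hn : ∃ C', e C' = n
      · obtain ⟨C, rfl⟩ := hm
        obtain ⟨C', rfl⟩ := hn
        simp only [onFun, hIoo]
        exact hdisj C.2 C'.2 (Subtype.coe_injective.ne (he.ne_iff.1 hmn))
      · simp [onFun, hfiller n hn]
    · simp [onFun, hfiller m hm]
  · refine subset_antisymm (fun x hx => mem_iUnion.2 ⟨e ⟨_, x, hx, rfl⟩, ?_⟩)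
      (iUnion_subset fun n => ?_)
    · rw [hIoo]; exact mem_connectedComponentIn hx
    · by_cases hn : ∃ C, e C = n
      · obtain ⟨⟨_, x, hx, rfl⟩, rfl⟩ := hn
        rw [hIoo]; exact connectedComponentIn_subset S x
      · simp [hfiller n hn]
  · by_cases hn : ∃ C, e C = n
    · obtain ⟨C, rfl⟩ := hn
      rw [he.extend_apply, he.extend_apply]
      exact Or.inr ⟨hlu C, hl C, hu C⟩
    · exact Or.inl (hfiller n hn)

section Straighten

variable {E : Type*} [NormedAddCommGroup E] [NormedSpace ℝ E]

noncomputable def chord (f : ℝ → E) (a b t : ℝ) : E :=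
  AffineMap.lineMap (f a) (f b) ((t - a) / (b - a))

theorem chord_left (f : ℝ → E) (a b : ℝ) : chord f a b a = f a := by
  simp [chord]

theorem chord_right (f : ℝ → E) {a b : ℝ} (h : a ≠ b) : chord f a b b = f b := by
  simp [chord, div_self (sub_ne_zero.2 h.symm)]

theorem continuous_chord (f : ℝ → E) (a b : ℝ) : Continuous (chord f a b) := by
  unfold chord; fun_prop

theorem dist_chord (f : ℝ → E) {a b : ℝ} (h : a < b) (t t' : ℝ) :
    dist (chord f a b t) (chord f a b t') = |t - t'| / (b - a) * dist (f a) (f b) := by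
  rw [chord, chord, dist_lineMap_lineMap, Real.dist_eq, ← sub_div, sub_sub_sub_cancel_right,
    abs_div, abs_of_pos (sub_pos.2 h)]

theorem exists_endpoint_dist_chord_le {f : ℝ → E} {a b t t₀ : ℝ} (ht : t ∈ Ioo a b) (ht₀ : t₀ ∉ Ioo a b) :
    ∃ c ∈ ({a, b} : Set ℝ), |c - t₀| ≤ |t - t₀| ∧
      dist (chord f a b t) (f c) ≤ min 1 (|t - t₀| / (b - a)) * dist (f a) (f b) := by
  have hab : a < b := ht.1.trans ht.2
  have key : ∀ c ∈ ({a, b} : Set ℝ), |t - c| ≤ |t - t₀| →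
      dist (chord f a b t) (f c) ≤ min 1 (|t - t₀| / (b - a)) * dist (f a) (f b) := by
    rintro c hc htc
    have hcc : chord f a b c = f c := by
      rcases hc with rfl | rfl
      exacts [chord_left f c b, chord_right f hab.ne]
    have htc' : |t - c| ≤ b - a := by
      rcases hc with rfl | rfl <;> rw [abs_le] <;> constructor <;> linarith [ht.1, ht.2]
    rw [← hcc, dist_chord f hab]
    gcongr
    exact le_min ((div_le_one (sub_pos.2 hab)).2 htc') (by gcongr)
  rcases not_and_or.1 ht₀ with h | h <;> rw [not_lt] at h
  · refine ⟨a, by simp, ?_, key a (by simp) ?_⟩ <;> rw [abs_of_nonneg (by linarith [ht.1]),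
      abs_of_nonneg (by linarith [ht.1])] <;> linarith [ht.1]
  · refine ⟨b, by simp, ?_, key b (by simp) ?_⟩ <;> rw [abs_of_nonpos (by linarith [ht.2]),
      abs_of_nonpos (by linarith [ht.2])] <;> linarith [ht.2]

variable {ι : Type*}

open Classical in
/-- Meant for pairwise disjoint intervals, where `h.choose` is the only interval containing `t`. -/
noncomputable def straighten (f : ℝ → E) (a b : ι → ℝ) (t : ℝ) : E :=
  if h : ∃ i, t ∈ Ioo (a i) (b i) then chord f (a h.choose) (b h.choose) t else f t

theorem straighten_of_forall_notMem {f : ℝ → E} {a b : ι → ℝ} {t : ℝ}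
    (h : ∀ i, t ∉ Ioo (a i) (b i)) : straighten f a b t = f t := by
  rw [straighten, dif_neg (not_exists.2 h)]

theorem straighten_of_mem {f : ℝ → E} {a b : ι → ℝ}
    (hd : Pairwise (Disjoint on fun i => Ioo (a i) (b i))) {i : ι} {t : ℝ} (ht : t ∈ Ioo (a i) (b i)) : straighten f a b t = chord f (a i) (b i) t := by
  have h : ∃ i, t ∈ Ioo (a i) (b i) := ⟨i, ht⟩
  obtain rfl : h.choose = i := hd.eq (not_disjoint_iff.2 ⟨t, h.choose_spec, ht⟩)
  rw [straighten, dif_pos h]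

theorem endpoints_notMem_Ioo_of_pairwise_disjoint {a b : ι → ℝ}
    (hd : Pairwise (Disjoint on fun i => Ioo (a i) (b i))) {i : ι} (hab : a i < b i) (j : ι) :
    a i ∉ Ioo (a j) (b j) ∧ b i ∉ Ioo (a j) (b j) := by
  rcases eq_or_ne i j with rfl | hij
  · simp
  have := Ioo_disjoint_Ioo.1 (hd hij)
  constructor <;> rintro ⟨h₁, h₂⟩ <;> rcases min_le_iff.1 this with h | h <;>
    rcases le_max_iff.1 h with h' | h' <;> linarith

theorem straighten_eqOn_chord {f : ℝ → E} {a b : ι → ℝ}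
    (hd : Pairwise (Disjoint on fun i => Ioo (a i) (b i))) {i : ι} (hab : a i < b i) :
    EqOn (straighten f a b) (chord f (a i) (b i)) (Icc (a i) (b i)) := by
  intro t ht
  rcases eq_endpoints_or_mem_Ioo_of_mem_Icc ht with rfl | rfl | ht'
  · rw [straighten_of_forall_notMem fun j => (endpoints_notMem_Ioo_of_pairwise_disjoint hd hab j).1,
      chord_left]
  · rw [straighten_of_forall_notMem fun j => (endpoints_notMem_Ioo_of_pairwise_disjoint hd hab j).2,
      chord_right f hab.ne]
  · exact straighten_of_mem hd ht'

theorem continuousOn_straighten {f : ℝ → E} {s : Set ℝ} (hf : UniformContinuousOn f s)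
    (hfs : IsBounded (f '' s)) {a b : ι → ℝ} (hd : Pairwise (Disjoint on fun i => Ioo (a i) (b i)))
    (hs : ∀ i, Icc (a i) (b i) ⊆ s) : ContinuousOn (straighten f a b) s := by
  intro t₀ ht₀
  by_cases h₀ : ∃ i, t₀ ∈ Ioo (a i) (b i)
  · obtain ⟨i, hi⟩ := h₀
    have : chord f (a i) (b i) =ᶠ[nhds t₀] straighten f a b :=
      Filter.eventuallyEq_of_mem (Ioo_mem_nhds hi.1 hi.2) fun t ht => (straighten_of_mem hd ht).symm
    exact ((continuous_chord f _ _).continuousAt.congr this).continuousWithinAt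
  push Not at h₀
  obtain ⟨D, hD, hfD⟩ : ∃ D > 0, ∀ x ∈ s, ∀ y ∈ s, dist (f x) (f y) ≤ D := by
    obtain ⟨C, hC⟩ := Metric.isBounded_iff.1 hfs
    exact ⟨max C 1, by positivity, fun x hx y hy =>
      (hC (mem_image_of_mem f hx) (mem_image_of_mem f hy)).trans (le_max_left _ _)⟩
  rw [Metric.continuousWithinAt_iff]
  intro ε hε
  obtain ⟨δ, hδ, hfδ⟩ := Metric.uniformContinuousOn_iff.1 hf (ε / 2) (half_pos hε)
  refine ⟨min δ (δ * ε / (2 * D)), by positivity, fun t ht htt₀ => ?_⟩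
  rw [straighten_of_forall_notMem h₀]
  rw [Real.dist_eq] at htt₀
  have htt₀δ : |t - t₀| < δ := htt₀.trans_le (min_le_left _ _)
  by_cases h : ∃ i, t ∈ Ioo (a i) (b i)
  swap
  · push Not at h
    rw [straighten_of_forall_notMem h]
    exact (hfδ t ht t₀ ht₀ htt₀δ).trans (half_lt_self hε)
  obtain ⟨i, hi⟩ := h
  have hab : a i < b i := hi.1.trans hi.2
  have ha : a i ∈ s := hs i (left_mem_Icc.2 hab.le)
  have hb : b i ∈ s := hs i (right_mem_Icc.2 hab.le)
  obtain ⟨c, hc, hct₀, hchord⟩ := exists_endpoint_dist_chord_le (f := f) hi (h₀ i)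
  have hcs : c ∈ s := by rcases hc with rfl | rfl <;> assumption
  -- a short chord has close endpoints, a long one is crossed slowly
  have hsmall : min 1 (|t - t₀| / (b i - a i)) * dist (f (a i)) (f (b i)) ≤ ε / 2 := by
    rcases lt_or_ge (b i - a i) δ with hlen | hlen
    · refine (mul_le_of_le_one_left dist_nonneg (min_le_left _ _)).trans (hfδ _ ha _ hb ?_).le
      rwa [Real.dist_eq, abs_sub_comm, abs_of_pos (sub_pos.2 hab)]
    · calc min 1 (|t - t₀| / (b i - a i)) * dist (f (a i)) (f (b i))
          ≤ (δ * ε / (2 * D)) / δ * D := by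
            gcongr
            · exact (min_le_right _ _).trans (div_le_div₀ (by positivity)
                (htt₀.le.trans (min_le_right _ _)) hδ hlen)
            · exact hfD _ ha _ hb
        _ = ε / 2 := by field_simp
  rw [straighten_of_mem hd hi]
  calc dist (chord f (a i) (b i) t) (f t₀)
        ≤ dist (chord f (a i) (b i) t) (f c) + dist (f c) (f t₀) := dist_triangle _ _ _
    _ < ε / 2 + ε / 2 := add_lt_add_of_le_of_lt (hchord.trans hsmall)
        (hfδ c hcs t₀ ht₀ (hct₀.trans_lt htt₀δ))
    _ = ε := add_halves ε

end Straighten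

theorem ContinuousOn.isOpen_sep_Icc {α Y : Type*} [LinearOrder α] [TopologicalSpace α]
    [OrderTopology α] [TopologicalSpace Y] {f : α → Y} {p q : α} {U : Set Y}
    (hf : ContinuousOn f (Icc p q)) (hU : IsOpen U) (hp : f p ∉ U) (hq : f q ∉ U) :
    IsOpen {t ∈ Icc p q | f t ∈ U} := by
  have : {t ∈ Icc p q | f t ∈ U} = Ioo p q ∩ f ⁻¹' U := by
    ext t
    refine ⟨fun ⟨ht, htU⟩ => ⟨⟨ht.1.lt_of_ne ?_, ht.2.lt_of_ne ?_⟩, htU⟩,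
      fun ⟨ht, htU⟩ => ⟨Ioo_subset_Icc_self ht, htU⟩⟩
    · rintro rfl; exact hp htU
    · rintro rfl; exact hq htU
  exact this ▸ (hf.mono Ioo_subset_Icc_self).isOpen_inter_preimage isOpen_Ioo hU

theorem ContinuousOn.mapsTo_frontier_sep {X Y : Type*} [TopologicalSpace X] [TopologicalSpace Y]
    {f : X → Y} {K : Set X} {U : Set Y} (hf : ContinuousOn f K) (hK : IsClosed K)
    (hU : IsOpen U) (hS : IsOpen {x ∈ K | f x ∈ U}) :
    MapsTo f (frontier {x ∈ K | f x ∈ U}) (frontier U) := by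
  intro x hx
  rw [hS.frontier_eq] at hx
  rw [hU.frontier_eq]
  have hcl : closure {x ∈ K | f x ∈ U} ⊆ K := hK.closure_subset_iff.2 (sep_subset _ _)
  exact ⟨closure_mono (image_subset_iff.2 fun y hy => hy.2)
    ((hf.mono hcl).image_closure (mem_image_of_mem f hx.1)), fun hxU => hx.2 ⟨hcl hx.1, hxU⟩⟩

/-- For a path `α` in the plane with endpoints outside an open set `U`, the preimage of `U`
is a countable disjoint union of open intervals whose endpoints map to `∂U`, and replacing
`α` on each such interval by the constant-speed straight segment between the endpoint values
yields a continuous path. -/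
theorem straighten_path_through_open_set
    (α : ℝ → ℝ × ℝ) (hα : ContinuousOn α (Set.Icc (0 : ℝ) 1))
    (U : Set (ℝ × ℝ)) (hU : IsOpen U) (h0 : α 0 ∉ U) (h1 : α 1 ∉ U) :
    ∃ a b : ℕ → ℝ, (∀ n, a n ≤ b n) ∧ (∀ n, Set.Icc (a n) (b n) ⊆ Set.Icc (0 : ℝ) 1) ∧
      (Pairwise fun m n => Disjoint (Set.Ioo (a m) (b m)) (Set.Ioo (a n) (b n))) ∧
      {t ∈ Set.Icc (0 : ℝ) 1 | α t ∈ U} = ⋃ n, Set.Ioo (a n) (b n) ∧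
      (∀ n, a n < b n → α (a n) ∈ frontier U ∧ α (b n) ∈ frontier U) ∧
      ∃ α' : ℝ → ℝ × ℝ,
        (∀ t ∈ Set.Icc (0 : ℝ) 1, α t ∉ U → α' t = α t) ∧
        (∀ n, a n < b n → ∀ t ∈ Set.Icc (a n) (b n),
          α' t = (1 - (t - a n) / (b n - a n)) • α (a n) +
            ((t - a n) / (b n - a n)) • α (b n)) ∧
        ContinuousOn α' (Set.Icc (0 : ℝ) 1) := by
  set S := {t ∈ Icc (0 : ℝ) 1 | α t ∈ U}
  have hS : IsOpen S := hα.isOpen_sep_Icc hU h0 h1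
  have hfrS : frontier S ⊆ Icc 0 1 :=
    frontier_subset_closure.trans (isClosed_Icc.closure_subset_iff.2 (sep_subset _ _))
  obtain ⟨a, b, hd, hSab, hab⟩ :=
    hS.exists_eq_iUnion_Ioo_nat ((Metric.isBounded_Icc (0 : ℝ) 1).subset (sep_subset _ _)) 0
  have hIcc (n : ℕ) : Icc (a n) (b n) ⊆ Icc 0 1 := by
    rcases hab n with ⟨ha, hb⟩ | ⟨-, ha, hb⟩
    · simp [ha, hb]
    · exact Icc_subset_Icc (hfrS ha).1 (hfrS hb).2
  refine ⟨a, b, fun n => ?_, hIcc, hd, hSab, fun n hn => ?_, straighten α a b,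
    fun t ht htU => straighten_of_forall_notMem fun n htn => htU (hSab ▸ mem_iUnion_of_mem n htn).2,
    fun n hn t ht => (straighten_eqOn_chord hd hn ht).trans (AffineMap.lineMap_apply_module _ _ _),
    continuousOn_straighten (isCompact_Icc.uniformContinuousOn_of_continuous hα)
      (isCompact_Icc.image_of_continuousOn hα).isBounded hd hIcc⟩
  · rcases hab n with ⟨ha, hb⟩ | ⟨h, -⟩
    exacts [(ha.trans hb.symm).le, h.le]
  · rcases hab n with ⟨ha, hb⟩ | ⟨-, ha, hb⟩
    · exact absurd hn (by simp [ha, hb])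
    · have := hα.mapsTo_frontier_sep isClosed_Icc hU hS
      exact ⟨this ha, this hb⟩
end
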